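/- Let α > 0, γ > 0, τ ∈ [0,1], and let X, Y be nonnegative random variables with joint survival function P(X>x, Y>y) = e^(−αx − γ·e^(ατx)·y) for x,y > 0. Then X is exponential with rate α, Y is exponential with rate γ, Cov(X,Y) = −τ/(α·γ·(1+τ)), Var(X) = 1/α², Var(Y) = 1/γ², and the Pearson correlation satisfies ρ(X,Y) = −τ/(1+τ), so ρ(X,Y) ∈ [−1/2, 0]. -/

import Mathlib

/-!
Letting `y ↓ 0`, `x ↓ 0` or both in the joint survival function (continuity of measure from
below) shows that `X, Y > 0` almost surely and that the marginals are exponential, and the tail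
formula `E[Z^k] = ∫₀^∞ P(Z^k > t) dt` gives their first two moments. The mixed moment comes from
the bivariate tail formula `E[XY] = ∫₀^∞ ∫₀^∞ P(X > x, Y > y) dy dx`: the inner integral is
`e^(-αx) / (γ e^(ατx))`, so `E[XY] = 1 / (αγ(1+τ))`, while `E[X] E[Y] = 1 / (αγ)`.
-/

open MeasureTheory ProbabilityTheory Set Filter Topology

lemma integral_exp_neg_mul_Ioi {r : ℝ} (hr : 0 < r) :
    ∫ t in Ioi (0:ℝ), Real.exp (-(r * t)) = 1 / r := by
  simpa [Real.Gamma_one] using Real.integral_rpow_mul_exp_neg_mul_Ioi one_pos hr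

lemma integral_mul_exp_neg_mul_Ioi {r : ℝ} (hr : 0 < r) :
    ∫ t in Ioi (0:ℝ), t * Real.exp (-(r * t)) = 1 / r ^ 2 := by
  have h := Real.integral_rpow_mul_exp_neg_mul_Ioi two_pos hr
  norm_num [Real.Gamma_two] at h
  simpa using h

lemma integral_exp_neg_mul_sqrt_Ioi {r : ℝ} (hr : 0 < r) :
    ∫ t in Ioi (0:ℝ), Real.exp (-(r * √t)) = 2 / r ^ 2 := by
  rw [← integral_comp_rpow_Ioi_of_pos two_pos, ← mul_one_div, ← integral_mul_exp_neg_mul_Ioi hr,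
    ← integral_const_mul]
  refine setIntegral_congr_fun measurableSet_Ioi fun t (ht : 0 < t) => ?_
  norm_num [Real.sqrt_sq ht.le, mul_assoc]

lemma lintegral_ofReal_exp_neg_mul_Ioi {r : ℝ} (hr : 0 < r) :
    ∫⁻ t in Ioi (0:ℝ), ENNReal.ofReal (Real.exp (-(r * t))) = ENNReal.ofReal (1 / r) := by
  rw [← ofReal_integral_eq_lintegral_ofReal
    (by simpa only [neg_mul] using (exp_neg_integrableOn_Ioi 0 hr).integrable)
    (.of_forall fun _ => (Real.exp_pos _).le), integral_exp_neg_mul_Ioi hr]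

lemma lintegral_lintegral_exp_afc {α γ τ : ℝ} (hα : 0 < α) (hγ : 0 < γ) (hτ : 0 ≤ τ) :
    ∫⁻ x in Ioi (0:ℝ), ∫⁻ y in Ioi (0:ℝ),
      ENNReal.ofReal (Real.exp (-(α * x) - γ * Real.exp (α * τ * x) * y)) =
      ENNReal.ofReal (1 / (α * γ * (1 + τ))) := by
  have hinner : ∀ x, ∫⁻ y in Ioi (0:ℝ),
      ENNReal.ofReal (Real.exp (-(α * x) - γ * Real.exp (α * τ * x) * y)) =
      ENNReal.ofReal (1 / γ) * ENNReal.ofReal (Real.exp (-(α * (1 + τ) * x))) := by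
    intro x
    have hsplit : ∀ y, Real.exp (-(α * x) - γ * Real.exp (α * τ * x) * y) =
        Real.exp (-(α * x)) * Real.exp (-(γ * Real.exp (α * τ * x) * y)) := fun y => by
      rw [← Real.exp_add]; ring_nf
    simp_rw [hsplit, ENNReal.ofReal_mul (Real.exp_pos _).le]
    rw [lintegral_const_mul' _ _ ENNReal.ofReal_ne_top,
      lintegral_ofReal_exp_neg_mul_Ioi (by positivity), ← ENNReal.ofReal_mul (by positivity),
      ← ENNReal.ofReal_mul (by positivity)]
    congr 1
    rw [mul_add, mul_one, add_mul, neg_add, Real.exp_add, Real.exp_neg (α * τ * x)]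
    field_simp
  simp_rw [hinner]
  rw [lintegral_const_mul' _ _ ENNReal.ofReal_ne_top,
    lintegral_ofReal_exp_neg_mul_Ioi (by positivity), ← ENNReal.ofReal_mul (by positivity)]
  congr 1
  field_simp

section

variable {Ω : Type*} [MeasurableSpace Ω] {μ : Measure Ω}

lemma measureReal_inter_setOf_lt_eq_of_tendsto [IsFiniteMeasure μ]
    {A : Set Ω} {f : Ω → ℝ} {a L : ℝ} {c : ℝ → ℝ}
    (hc : ∀ t > a, μ.real (A ∩ {ω | t < f ω}) = c t) (hL : Tendsto c (𝓝[>] a) (𝓝 L)) :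
    μ.real (A ∩ {ω | a < f ω}) = L := by
  obtain ⟨u, hu_anti, hu_gt, hu_lim⟩ := exists_seq_strictAnti_tendsto a
  have hmono : Monotone fun n => A ∩ {ω | u n < f ω} := fun m n hmn =>
    inter_subset_inter_right _ fun ω hω => (hu_anti.antitone hmn).trans_lt hω
  have hunion : ⋃ n, A ∩ {ω | u n < f ω} = A ∩ {ω | a < f ω} := by
    rw [← inter_iUnion]
    congr 1
    ext ω
    simp only [mem_iUnion, mem_ofPred_eq]
    exact ⟨fun ⟨n, hn⟩ => (hu_gt n).trans hn,
      fun h => (hu_lim.eventually (gt_mem_nhds h)).exists⟩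
  have h_union : Tendsto (fun n => μ.real (A ∩ {ω | u n < f ω})) atTop
      (𝓝 (μ.real (A ∩ {ω | a < f ω}))) := by
    rw [← hunion]
    exact (ENNReal.tendsto_toReal (measure_ne_top _ _)).comp (tendsto_measure_iUnion_atTop hmono)
  have h_c : Tendsto (fun n => μ.real (A ∩ {ω | u n < f ω})) atTop (𝓝 L) := by
    simp_rw [hc _ (hu_gt _)]
    exact hL.comp (tendsto_nhdsWithin_iff.2 ⟨hu_lim, .of_forall hu_gt⟩)
  exact tendsto_nhds_unique h_union h_c

lemma exponential_afc_marginals [IsProbabilityMeasure μ]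
    {X Y : Ω → ℝ} (hX : Measurable X) (hY : Measurable Y) {α γ τ : ℝ}
    (hjoint : ∀ x > (0:ℝ), ∀ y > (0:ℝ),
      μ.real {ω | x < X ω ∧ y < Y ω} = Real.exp (-(α * x) - γ * Real.exp (α * τ * x) * y)) :
    (∀ x > (0:ℝ), μ.real {ω | x < X ω} = Real.exp (-(α * x))) ∧
    (∀ y > (0:ℝ), μ.real {ω | y < Y ω} = Real.exp (-(γ * y))) := by
  have hX_pos_inter :
      ∀ y > (0:ℝ), μ.real ({ω | 0 < X ω} ∩ {ω | y < Y ω}) = Real.exp (-(γ * y)) := by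
    intro y hy
    rw [inter_comm]
    refine measureReal_inter_setOf_lt_eq_of_tendsto (f := X)
      (c := fun x => Real.exp (-(α * x) - γ * Real.exp (α * τ * x) * y)) (fun x hx => ?_) ?_
    · rw [inter_comm]; exact hjoint x hx y hy
    · refine tendsto_nhdsWithin_of_tendsto_nhds ?_
      simpa using ((by fun_prop : Continuous fun x =>
        Real.exp (-(α * x) - γ * Real.exp (α * τ * x) * y)).tendsto 0)
  have hY_pos_inter :
      ∀ x > (0:ℝ), μ.real ({ω | x < X ω} ∩ {ω | 0 < Y ω}) = Real.exp (-(α * x)) := by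
    intro x hx
    refine measureReal_inter_setOf_lt_eq_of_tendsto (f := Y) (hjoint x hx) ?_
    refine tendsto_nhdsWithin_of_tendsto_nhds ?_
    simpa using ((by fun_prop : Continuous fun y =>
      Real.exp (-(α * x) - γ * Real.exp (α * τ * x) * y)).tendsto 0)
  have hpos : μ.real ({ω | 0 < X ω} ∩ {ω | 0 < Y ω}) = 1 := by
    refine measureReal_inter_setOf_lt_eq_of_tendsto (f := Y) hX_pos_inter ?_
    refine tendsto_nhdsWithin_of_tendsto_nhds ?_
    simpa using ((by fun_prop : Continuous fun y => Real.exp (-(γ * y))).tendsto 0)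
  have hpos_compl : μ ({ω | 0 < X ω} ∩ {ω | 0 < Y ω})ᶜ = 0 := by
    refine (prob_compl_eq_zero_iff ((hX measurableSet_Ioi).inter (hY measurableSet_Ioi))).2 ?_
    exact (ENNReal.toReal_eq_one_iff _).1 hpos
  refine ⟨fun x hx => ?_, fun y hy => ?_⟩
  · rw [← hY_pos_inter x hx, measureReal_def, measureReal_def, measure_inter_conull]
    exact measure_mono_null (compl_subset_compl.2 inter_subset_right) hpos_compl
  · rw [← hX_pos_inter y hy, measureReal_def, measureReal_def, inter_comm, measure_inter_conull]
    exact measure_mono_null (compl_subset_compl.2 inter_subset_left) hpos_compl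

section Moments

variable {X : Ω → ℝ} {r : ℝ}

lemma integral_eq_of_survival_exp (hint : Integrable X μ) (hnn : 0 ≤ᵐ[μ] X) (hr : 0 < r)
    (hsurv : ∀ t > (0:ℝ), μ.real {ω | t < X ω} = Real.exp (-(r * t))) :
    ∫ ω, X ω ∂μ = 1 / r := by
  rw [hint.integral_eq_integral_meas_lt hnn, ← integral_exp_neg_mul_Ioi hr]
  exact setIntegral_congr_fun measurableSet_Ioi hsurv

lemma integral_sq_eq_of_survival_exp (hX2 : MemLp X 2 μ) (hnn : 0 ≤ᵐ[μ] X) (hr : 0 < r)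
    (hsurv : ∀ t > (0:ℝ), μ.real {ω | t < X ω} = Real.exp (-(r * t))) :
    ∫ ω, X ω ^ 2 ∂μ = 2 / r ^ 2 := by
  rw [hX2.integrable_sq.integral_eq_integral_meas_lt (.of_forall fun ω => sq_nonneg _),
    ← integral_exp_neg_mul_sqrt_Ioi hr]
  refine setIntegral_congr_fun measurableSet_Ioi fun t (ht : 0 < t) => ?_
  rw [← hsurv _ (Real.sqrt_pos.2 ht)]
  refine measureReal_congr ?_
  filter_upwards [hnn] with ω hω
  exact propext (Real.sqrt_lt ht.le hω).symm

lemma variance_eq_of_survival_exp [IsProbabilityMeasure μ] (hX2 : MemLp X 2 μ)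
    (hnn : 0 ≤ᵐ[μ] X) (hr : 0 < r)
    (hsurv : ∀ t > (0:ℝ), μ.real {ω | t < X ω} = Real.exp (-(r * t))) :
    variance X μ = 1 / r ^ 2 := by
  rw [variance_eq_sub hX2, Pi.pow_def, integral_sq_eq_of_survival_exp hX2 hnn hr hsurv,
    integral_eq_of_survival_exp (hX2.integrable one_le_two) hnn hr hsurv]
  ring

end Moments

lemma lintegral_ofReal_mul_eq_lintegral_measure_lt [SFinite μ]
    {X Y : Ω → ℝ} (hX : Measurable X) (hY : Measurable Y) (hXnn : 0 ≤ᵐ[μ] X) :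
    ∫⁻ ω, ENNReal.ofReal (X ω * Y ω) ∂μ =
      ∫⁻ x in Ioi 0, ∫⁻ y in Ioi 0, μ {ω | x < X ω ∧ y < Y ω} := by
  set ν := (volume.restrict (Ioi (0:ℝ))).prod (volume.restrict (Ioi (0:ℝ)))
  set S := {q : Ω × (ℝ × ℝ) | q.2.1 < X q.1 ∧ q.2.2 < Y q.1}
  have hS : MeasurableSet S :=
    (measurableSet_lt (measurable_fst.comp measurable_snd) (hX.comp measurable_fst)).inter
      (measurableSet_lt (measurable_snd.comp measurable_snd) (hY.comp measurable_fst))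
  have hslice : ∀ᵐ ω ∂μ, ENNReal.ofReal (X ω * Y ω) = ν (Prod.mk ω ⁻¹' S) := by
    filter_upwards [hXnn] with ω hω
    have : Prod.mk ω ⁻¹' S = Iio (X ω) ×ˢ Iio (Y ω) := rfl
    rw [this, Measure.prod_prod, Measure.restrict_apply measurableSet_Iio,
      Measure.restrict_apply measurableSet_Iio, Iio_inter_Ioi, Iio_inter_Ioi, Real.volume_Ioo,
      Real.volume_Ioo, sub_zero, sub_zero, ENNReal.ofReal_mul hω]
  rw [lintegral_congr_ae hslice, ← Measure.prod_apply hS, Measure.prod_apply_symm hS,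
    lintegral_prod _ (measurable_measure_prodMk_right hS).aemeasurable]
  rfl

lemma integral_mul_eq_of_exponential_afc [IsFiniteMeasure μ] {X Y : Ω → ℝ}
    (hX : Measurable X) (hY : Measurable Y) (hXnn : 0 ≤ᵐ[μ] X) (hYnn : 0 ≤ᵐ[μ] Y)
    (hXYint : Integrable (fun ω => X ω * Y ω) μ) {α γ τ : ℝ}
    (hα : 0 < α) (hγ : 0 < γ) (hτ : 0 ≤ τ)
    (hjoint : ∀ x > (0:ℝ), ∀ y > (0:ℝ),
      μ.real {ω | x < X ω ∧ y < Y ω} = Real.exp (-(α * x) - γ * Real.exp (α * τ * x) * y)) :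
    ∫ ω, X ω * Y ω ∂μ = 1 / (α * γ * (1 + τ)) := by
  have hXYnn : 0 ≤ᵐ[μ] fun ω => X ω * Y ω := by
    filter_upwards [hXnn, hYnn] with ω hx hy using mul_nonneg hx hy
  rw [integral_eq_lintegral_of_nonneg_ae hXYnn hXYint.aestronglyMeasurable,
    lintegral_ofReal_mul_eq_lintegral_measure_lt hX hY hXnn,
    ← ENNReal.toReal_ofReal (by positivity : 0 ≤ 1 / (α * γ * (1 + τ))),
    ← lintegral_lintegral_exp_afc hα hγ hτ]
  refine congrArg ENNReal.toReal (setLIntegral_congr_fun measurableSet_Ioi fun x hx =>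
    setLIntegral_congr_fun measurableSet_Ioi fun y hy => ?_)
  rw [← hjoint x hx y hy, ofReal_measureReal]

end

theorem exponential_afc_moments
    {Ω : Type*} [MeasurableSpace Ω] (μ : Measure Ω) [IsProbabilityMeasure μ]
    (X Y : Ω → ℝ) (hX : Measurable X) (hY : Measurable Y)
    (hXnn : ∀ ω, 0 ≤ X ω) (hYnn : ∀ ω, 0 ≤ Y ω)
    (hX2 : MemLp X 2 μ) (hY2 : MemLp Y 2 μ)
    (hXYint : Integrable (fun ω => X ω * Y ω) μ)
    (α γ τ : ℝ) (hα : 0 < α) (hγ : 0 < γ) (hτ0 : 0 ≤ τ) (hτ1 : τ ≤ 1)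
    (hjoint : ∀ x > (0:ℝ), ∀ y > (0:ℝ),
      (μ {ω | x < X ω ∧ y < Y ω}).toReal
        = Real.exp (-(α * x) - γ * Real.exp (α * τ * x) * y)) :
    (∀ x > (0:ℝ), (μ {ω | x < X ω}).toReal = Real.exp (-(α * x))) ∧
    (∀ y > (0:ℝ), (μ {ω | y < Y ω}).toReal = Real.exp (-(γ * y))) ∧
    (∫ ω, X ω * Y ω ∂μ - (∫ ω, X ω ∂μ) * ∫ ω, Y ω ∂μ
        = -τ / (α * γ * (1 + τ))) ∧
    variance X μ = 1 / α ^ 2 ∧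
    variance Y μ = 1 / γ ^ 2 ∧
    (∫ ω, X ω * Y ω ∂μ - (∫ ω, X ω ∂μ) * ∫ ω, Y ω ∂μ) /
        Real.sqrt (variance X μ * variance Y μ) = -τ / (1 + τ) ∧
    -τ / (1 + τ) ∈ Icc (-(1/2) : ℝ) 0 := by
  have hτ : 0 < 1 + τ := by linarith
  obtain ⟨hmargX, hmargY⟩ := exponential_afc_marginals hX hY hjoint
  have hXnn' : 0 ≤ᵐ[μ] X := .of_forall hXnn
  have hYnn' : 0 ≤ᵐ[μ] Y := .of_forall hYnn
  have hEX := integral_eq_of_survival_exp (hX2.integrable one_le_two) hXnn' hα hmargX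
  have hEY := integral_eq_of_survival_exp (hY2.integrable one_le_two) hYnn' hγ hmargY
  have hvarX := variance_eq_of_survival_exp hX2 hXnn' hα hmargX
  have hvarY := variance_eq_of_survival_exp hY2 hYnn' hγ hmargY
  have hEXY := integral_mul_eq_of_exponential_afc hX hY hXnn' hYnn' hXYint hα hγ hτ0 hjoint
  have hcov : ∫ ω, X ω * Y ω ∂μ - (∫ ω, X ω ∂μ) * ∫ ω, Y ω ∂μ = -τ / (α * γ * (1 + τ)) := by
    rw [hEXY, hEX, hEY]
    field_simp
    ring
  have hsd : Real.sqrt (variance X μ * variance Y μ) = 1 / (α * γ) := by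
    rw [hvarX, hvarY, show 1 / α ^ 2 * (1 / γ ^ 2) = (1 / (α * γ)) ^ 2 by ring,
      Real.sqrt_sq (by positivity)]
  refine ⟨hmargX, hmargY, hcov, hvarX, hvarY, ?_, ?_, ?_⟩
  · rw [hcov, hsd]
    field_simp
  · rw [le_div_iff₀ hτ]
    linarith
  · exact div_nonpos_of_nonpos_of_nonneg (by linarith) hτ.le
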